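/- Assume 0 < μ_1 (the focusing case) and let β̄ be the unique zero of g in (−∞, μ_1). Then g(β) < 0 for all β < β̄, f is strictly increasing on (−∞, β̄), and f maps (−∞, β̄) bijectively onto the interval (−1 + 2/(n−1), ∞). In particular, for every real λ > −1 + 2/(n−1) the equation f(β) = λ has exactly one solution β ∈ (−∞, β̄), and for λ ≤ −1 + 2/(n−1) it has none. -/

import Mathlib

open Set Finset Filter Topology

/-!
On `(-∞, μ₁)` the function `g` equals `G β = 1 + ∑ⱼ β / (μⱼ - β)`. When every `μⱼ > 0`, each summand
is continuous and strictly increasing with limit `-1` at `-∞`, so `G` increases continuously from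
`1 - n` to `G β̄ = 0` and maps `(-∞, β̄)` bijectively onto `(1 - n, 0)`. Finally `f = h ∘ G` with
`h t = -1 - 2 / t`, which is a strictly increasing bijection from `(1 - n, 0)` onto
`(-1 + 2 / (n - 1), ∞)`.
-/

theorem Set.BijOn.existsUnique {α β : Type*} {f : α → β} {s : Set α} {t : Set β}
    (h : BijOn f s t) {y : β} (hy : y ∈ t) : ∃! x, x ∈ s ∧ f x = y := by
  obtain ⟨x, hx, rfl⟩ := h.surjOn hy
  exact ⟨x, ⟨hx, rfl⟩, fun x' ⟨hx', hfx'⟩ => h.injOn hx' hx hfx'⟩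

theorem strictMonoOn_div_sub_self {m : ℝ} (hm : 0 < m) :
    StrictMonoOn (fun β => β / (m - β)) (Iio m) := by
  intro x (hx : x < m) y (hy : y < m) hxy
  rw [div_lt_div_iff₀ (sub_pos.2 hx) (sub_pos.2 hy)]
  nlinarith

theorem tendsto_div_sub_self_atBot (m : ℝ) :
    Tendsto (fun β => β / (m - β)) atBot (𝓝 (-1)) := by
  have hden : Tendsto (fun β : ℝ => m - β) atBot atTop :=
    tendsto_atTop_add_const_left atBot m tendsto_neg_atBot_atTop
  have hlim : Tendsto (fun β => -1 + m / (m - β)) atBot (𝓝 (-1)) := by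
    simpa using tendsto_const_nhds.add (tendsto_const_nhds.div_atTop hden)
  refine hlim.congr' ?_
  filter_upwards [eventually_lt_atBot m] with β hβ
  field_simp [(sub_pos.2 hβ).ne']
  ring

theorem bijOn_Iio_Ioo_of_tendsto_atBot {f : ℝ → ℝ} {b L : ℝ} (hcont : ContinuousOn f (Iic b))
    (hmono : StrictMonoOn f (Iic b)) (hlim : Tendsto f atBot (𝓝 L)) :
    BijOn f (Iio b) (Ioo L (f b)) := by
  refine ⟨fun x (hx : x < b) => ⟨?_, hmono hx.le self_mem_Iic hx⟩,
    hmono.injOn.mono Iio_subset_Iic_self, ?_⟩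
  · have hle : L ≤ f (x - 1) := le_of_tendsto hlim <| by
      filter_upwards [eventually_le_atBot (x - 1)] with y hy
      exact hmono.monotoneOn (show y ≤ b by linarith) (show x - 1 ≤ b by linarith) hy
    exact hle.trans_lt (hmono (show x - 1 ≤ b by linarith) hx.le (by linarith))
  · intro y ⟨hLy, hyb⟩
    obtain ⟨c, hc⟩ := eventually_atBot.1 (hlim.eventually_lt_const hLy)
    set a := min c (b - 1)
    have hab : a < b := (min_le_right _ _).trans_lt (by linarith)
    have hIcc : Icc a b ⊆ Iic b := Icc_subset_Iic_self
    obtain ⟨x, hx, rfl⟩ :=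
      intermediate_value_Ico hab.le (hcont.mono hIcc) ⟨(hc a (min_le_left _ _)).le, hyb⟩
    exact ⟨x, hx.2, rfl⟩

theorem strictMonoOn_neg_one_sub_two_div : StrictMonoOn (fun t : ℝ => -1 - 2 / t) (Iio 0) := by
  intro x hx y hy hxy
  have : 1 / y < 1 / x := one_div_lt_one_div_of_neg_of_lt hy hxy
  simp only [sub_lt_sub_iff_left, div_eq_mul_one_div (2 : ℝ)]
  linarith

theorem bijOn_neg_one_sub_two_div {L : ℝ} (hL : L < 0) :
    BijOn (fun t : ℝ => -1 - 2 / t) (Ioo L 0) (Ioi (-1 - 2 / L)) := by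
  refine ⟨fun t ⟨hLt, ht⟩ => strictMonoOn_neg_one_sub_two_div hL ht hLt,
    strictMonoOn_neg_one_sub_two_div.injOn.mono Ioo_subset_Iio_self, fun y (hy : _ < y) => ?_⟩
  have hyL : -2 / L < y + 1 := by rw [neg_div]; linarith
  have hy1 : 0 < y + 1 := (div_pos_of_neg_of_neg (by norm_num) hL).trans hyL
  refine ⟨-2 / (y + 1), ⟨?_, div_neg_of_neg_of_pos (by norm_num) hy1⟩, ?_⟩
  · rw [lt_div_iff₀ hy1]
    linarith [(div_lt_iff_of_neg hL).1 hyL]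
  · field_simp
    ring

section Secular

variable {ι : Type*} [Fintype ι] (μ : ι → ℝ)

noncomputable def secularFun (β : ℝ) : ℝ := 1 + ∑ j, β / (μ j - β)

variable {μ}

theorem continuousOn_secularFun {b : ℝ} (hb : ∀ j, b < μ j) :
    ContinuousOn (secularFun μ) (Iic b) :=
  continuousOn_const.add <| continuousOn_finsetSum _ fun j _ =>
    continuousOn_id.div (continuousOn_const.sub continuousOn_id) fun _ hβ =>
      (sub_pos.2 ((Set.mem_Iic.1 hβ).trans_lt (hb j))).ne'

theorem strictMonoOn_secularFun [Nonempty ι] (hμ : ∀ j, 0 < μ j) {b : ℝ} (hb : ∀ j, b < μ j) :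
    StrictMonoOn (secularFun μ) (Iic b) := by
  intro x (hx : x ≤ b) y (hy : y ≤ b) hxy
  have hterm : ∀ j ∈ (Finset.univ : Finset ι), x / (μ j - x) < y / (μ j - y) := fun j _ =>
    strictMonoOn_div_sub_self (hμ j) (hx.trans_lt (hb j)) (hy.trans_lt (hb j)) hxy
  exact add_lt_add_right (sum_lt_sum_of_nonempty univ_nonempty hterm) 1

theorem tendsto_secularFun_atBot :
    Tendsto (secularFun μ) atBot (𝓝 (1 - Fintype.card ι)) := by
  have h := tendsto_const_nhds (x := (1 : ℝ)).add
    (tendsto_finsetSum Finset.univ fun j _ => tendsto_div_sub_self_atBot (μ j))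
  rwa [sum_const, card_univ, nsmul_eq_mul, mul_neg_one, ← sub_eq_add_neg] at h

end Secular

/-- Focusing case: `g < 0` on `(-∞, β̄)`, `f` is strictly increasing there and maps
`(-∞, β̄)` bijectively onto `(-1 + 2/(n-1), ∞)`; hence `f(β) = λ` has exactly one solution
`β < β̄` when `λ > -1 + 2/(n-1)` and none when `λ ≤ -1 + 2/(n-1)`. -/
theorem focusing_f_bijective (n : ℕ) (hn : 2 ≤ n) (μ : Fin n → ℝ) (hμ : Monotone μ)
    (g : ℝ → ℝ)
    (hg : ∀ β : ℝ, (∀ j, β ≠ μ j) → g β = 1 + β * ∑ j, 1 / (μ j - β))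
    (f : ℝ → ℝ)
    (hf : ∀ β : ℝ, g β ≠ 0 → f β = -1 - 2 / g β)
    (hfoc : 0 < μ ⟨0, by omega⟩)
    (βb : ℝ) (hβb : βb < μ ⟨0, by omega⟩) (hzero : g βb = 0) :
    (∀ β : ℝ, β < βb → g β < 0) ∧
    StrictMonoOn f (Iio βb) ∧
    Set.BijOn f (Iio βb) (Ioi (-1 + 2 / ((n : ℝ) - 1))) ∧
    (∀ lam : ℝ, -1 + 2 / ((n : ℝ) - 1) < lam → ∃! β : ℝ, β < βb ∧ f β = lam) ∧
    (∀ lam : ℝ, lam ≤ -1 + 2 / ((n : ℝ) - 1) → ¬∃ β : ℝ, β < βb ∧ f β = lam) := by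
  have : Nonempty (Fin n) := ⟨⟨0, by omega⟩⟩
  have hμ₀ : ∀ j, μ ⟨0, by omega⟩ ≤ μ j := fun j => hμ (show _ ≤ j from Nat.zero_le _)
  have hpos : ∀ j, 0 < μ j := fun j => hfoc.trans_le (hμ₀ j)
  have hbelow : ∀ j, βb < μ j := fun j => hβb.trans_le (hμ₀ j)
  have hgG : EqOn g (secularFun μ) (Iic βb) := fun β (hβ : β ≤ βb) => by
    rw [hg β fun j => (hβ.trans_lt (hbelow j)).ne, secularFun, mul_sum]
    simp only [mul_one_div]
  have hG : BijOn (secularFun μ) (Iio βb) (Ioo (1 - n) 0) := by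
    simpa [← hgG self_mem_Iic, hzero] using bijOn_Iio_Ioo_of_tendsto_atBot
      (continuousOn_secularFun hbelow) (strictMonoOn_secularFun hpos hbelow)
      tendsto_secularFun_atBot
  have hgneg : ∀ β, β < βb → g β < 0 := fun β hβ =>
    hgG (Set.mem_Iic_of_Iio hβ) ▸ (hG.mapsTo hβ).2
  have hfG : EqOn ((fun t => -1 - 2 / t) ∘ secularFun μ) f (Iio βb) := fun β hβ => by
    simp only [Function.comp, hf β (hgneg β hβ).ne, hgG (Set.mem_Iic_of_Iio hβ)]
  have hmono : StrictMonoOn f (Iio βb) :=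
    (strictMonoOn_neg_one_sub_two_div.comp ((strictMonoOn_secularFun hpos hbelow).mono
      Iio_subset_Iic_self) (hG.mapsTo.mono_right Ioo_subset_Iio_self)).congr hfG
  have hbij : BijOn f (Iio βb) (Ioi (-1 + 2 / ((n : ℝ) - 1))) := by
    have hL : (1 - n : ℝ) < 0 := by linarith [show (2 : ℝ) ≤ n by exact_mod_cast hn]
    have := ((bijOn_neg_one_sub_two_div hL).comp hG).congr hfG
    rwa [← neg_sub (n : ℝ), div_neg, sub_neg_eq_add] at this
  refine ⟨hgneg, hmono, hbij, fun lam hlam => hbij.existsUnique hlam, ?_⟩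
  rintro lam hlam ⟨β, hβ, rfl⟩
  exact (Set.mem_Ioi.1 (hbij.mapsTo hβ)).not_ge hlam
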